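/- arXiv:2603.05573 — 3 statements merged into one kernel-verified Lean document; each statement's English description precedes it below -/
import Mathlib

section
/- Let Φ, Φ' be solutions to the matrix ODEs Φ̇(t) = A(x(t))Φ(t), Φ'(t)' = A(x'(t))Φ'(t) with Φ(0) = Φ'(0) = I, where x' is a measure-preserving rearrangement of x. If the family {A(x) : x ∈ 𝒳} is commuting, then Φ(T) = Φ'(T). -/
/-!
For commuting generators the fundamental solution is `Φ(t) = exp (∫₀ᵗ A(x(τ)) dτ)`: the integrating
factor `exp (-∫₀ᵗ A(x(τ)) dτ)` turns the ODE into `d/dt (exp (-∫₀ᵗ A(x)) Φ(t)) = 0`. So `Φ(T)`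
depends on the path only through `∫₀ᵀ A(x(τ)) dτ`, and a measure-preserving rearrangement of
`[0,T]` leaves this integral unchanged.
-/

open Set MeasureTheory NormedSpace

section BanachAlgebra

variable {𝔸 : Type*} [NormedRing 𝔸] [NormedAlgebra ℝ 𝔸]

theorem Commute.integral_right {α : Type*} [MeasurableSpace α] {μ : Measure α} {f : α → 𝔸}
    {c : 𝔸} (hf : Integrable f μ) (h : ∀ x, Commute c (f x)) : Commute c (∫ x, f x ∂μ) := by
  rw [Commute, SemiconjBy, ← integral_const_mul_of_integrable hf,
    ← integral_mul_const_of_integrable hf]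
  exact congrArg _ (funext fun x => (h x).eq)

theorem Commute.intervalIntegral_right {μ : Measure ℝ} {f : ℝ → 𝔸} {c : 𝔸} {a b : ℝ}
    (hf : IntervalIntegrable f μ a b) (h : ∀ x, Commute c (f x)) :
    Commute c (∫ x in a..b, f x ∂μ) :=
  (Commute.integral_right hf.1 h).sub_right (Commute.integral_right hf.2 h)

variable [CompleteSpace 𝔸]

-- `NormedSpace.exp_add_of_commute` asks for a `ℚ`-algebra structure, which an `ℝ`-algebra does
-- not carry as an instance.
theorem exp_add_of_commute_of_real {x y : 𝔸} (h : Commute x y) : exp (x + y) = exp x * exp y :=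
  exp_add_of_commute_of_mem_ball (𝕂 := ℝ) h (by simp [expSeries_radius_eq_top])
    (by simp [expSeries_radius_eq_top])

theorem HasDerivAt.exp_of_commute {B : ℝ → 𝔸} {B' : 𝔸} {t : ℝ} (hB : HasDerivAt B B' t)
    (hc : ∀ s, Commute (B t) (B s)) :
    HasDerivAt (fun s => NormedSpace.exp (B s)) (NormedSpace.exp (B t) * B') t := by
  have hshift : HasDerivAt (fun s => NormedSpace.exp (B s - B t)) B' t := by
    have hexp : HasFDerivAt NormedSpace.exp (1 : 𝔸 →L[ℝ] 𝔸) (B t - B t) := by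
      rw [sub_self]
      exact hasFDerivAt_exp_zero
    simpa [Function.comp_def] using hexp.comp_hasDerivAt t (hB.sub_const (B t))
  convert hshift.const_mul (NormedSpace.exp (B t)) using 2 with s
  rw [← exp_add_of_commute_of_real ((hc s).sub_right (Commute.refl _)), add_sub_cancel]

theorem eq_exp_intervalIntegral_mul_of_hasDerivAt {f g : ℝ → 𝔸} {a b : ℝ} (hf : Continuous f)
    (hc : ∀ s t, Commute (f s) (f t)) (hg : ∀ t ∈ Icc a b, HasDerivAt g (f t * g t) t) :
    ∀ t ∈ Icc a b, g t = exp (∫ τ in a..t, f τ) * g a := by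
  set B : ℝ → 𝔸 := fun t => ∫ τ in a..t, f τ
  have hB : ∀ t, HasDerivAt B (f t) t := fun t =>
    (hf.integral_hasStrictDerivAt a t).hasDerivAt
  have hBB : ∀ s t, Commute (B s) (B t) := fun s t =>
    Commute.intervalIntegral_right (hf.intervalIntegrable _ _) fun τ =>
      (Commute.intervalIntegral_right (hf.intervalIntegrable _ _) (hc τ)).symm
  have hE : ∀ t, HasDerivAt (fun s => exp (-B s)) (exp (-B t) * -f t) t := fun t =>
    HasDerivAt.exp_of_commute (hB t).fun_neg fun s => (hBB t s).neg_left.neg_right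
  have hconst : ∀ t ∈ Icc a b, exp (-B t) * g t = exp (-B a) * g a := by
    refine constant_of_has_deriv_right_zero (fun t ht => ?_) (fun t ht => ?_)
    · exact ((hE t).continuousAt.mul (hg t ht).continuousAt).continuousWithinAt
    · convert ((hE t).fun_mul (hg t (Ico_subset_Icc_self ht))).hasDerivWithinAt using 1
      noncomm_ring
  intro t ht
  calc g t = exp (B t) * (exp (-B t) * g t) := by
        rw [← mul_assoc, ← exp_add_of_commute_of_real (Commute.refl _).neg_right, add_neg_cancel,
          exp_zero, one_mul]
    _ = exp (B t) * g a := by simp [hconst t ht, B]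

end BanachAlgebra

theorem MeasureTheory.MeasurePreserving.integral_comp_of_aestronglyMeasurable {α β E : Type*}
    [MeasurableSpace α] [MeasurableSpace β] [NormedAddCommGroup E] [NormedSpace ℝ E]
    {μ : Measure α} {ν : Measure β} {σ : α → β} (hσ : MeasurePreserving σ μ ν) {g : β → E}
    (hg : AEStronglyMeasurable g ν) : ∫ x, g (σ x) ∂μ = ∫ y, g y ∂ν := by
  rw [← hσ.map_eq] at hg ⊢
  exact (integral_map hσ.aemeasurable hg).symm

theorem intervalIntegral_comp_eq_of_measurePreserving {E : Type*} [NormedAddCommGroup E]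
    [NormedSpace ℝ E] {a b : ℝ} (hab : a ≤ b) {σ : ℝ → ℝ}
    (hσ : MeasurePreserving σ (volume.restrict (Icc a b)) (volume.restrict (Icc a b)))
    {g : ℝ → E} (hg : AEStronglyMeasurable g (volume.restrict (Icc a b))) :
    ∫ t in a..b, g (σ t) = ∫ t in a..b, g t := by
  rw [intervalIntegral.integral_of_le hab, intervalIntegral.integral_of_le hab,
    ← integral_Icc_eq_integral_Ioc, ← integral_Icc_eq_integral_Ioc]
  exact hσ.integral_comp_of_aestronglyMeasurable hg

theorem commuting_flow_eq_of_measurePreserving {X 𝔸 : Type*} [NormedRing 𝔸] [NormedAlgebra ℝ 𝔸]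
    [h𝔸 : CompleteSpace 𝔸] {a b : ℝ} (hab : a ≤ b) {F : X → 𝔸} (hF : ∀ x y, Commute (F x) (F y))
    {x x' : ℝ → X} {σ : ℝ → ℝ}
    (hσ : MeasurePreserving σ (volume.restrict (Icc a b)) (volume.restrict (Icc a b)))
    (hxx' : ∀ t ∈ Icc a b, x' t = x (σ t))
    (hFx : Continuous fun t => F (x t)) (hFx' : Continuous fun t => F (x' t))
    {g g' : ℝ → 𝔸} (hg : ∀ t ∈ Icc a b, HasDerivAt g (F (x t) * g t) t)
    (hg' : ∀ t ∈ Icc a b, HasDerivAt g' (F (x' t) * g' t) t) (hgg' : g a = g' a) :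
    g b = g' b := by
  have hint : ∫ t in a..b, F (x' t) = ∫ t in a..b, F (x t) := by
    rw [← intervalIntegral_comp_eq_of_measurePreserving hab hσ hFx.aestronglyMeasurable]
    refine intervalIntegral.integral_congr fun t ht => ?_
    rw [uIcc_of_le hab] at ht
    simp only [hxx' t ht]
  have hb : b ∈ Icc a b := right_mem_Icc.mpr hab
  rw [eq_exp_intervalIntegral_mul_of_hasDerivAt hFx (fun _ _ => hF _ _) hg b hb,
    eq_exp_intervalIntegral_mul_of_hasDerivAt hFx' (fun _ _ => hF _ _) hg' b hb, hint, hgg']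

attribute [local instance] Matrix.normedAddCommGroup Matrix.normedSpace

theorem commuting_flow_rearrangement_invariant_general
    (n : ℕ) (𝒳 : Type*) (T : ℝ) (hT : 0 ≤ T)
    (A : 𝒳 → Matrix (Fin n) (Fin n) ℝ)
    (hcomm : ∀ x y : 𝒳, A x * A y = A y * A x)
    (x x' : ℝ → 𝒳) (σ : ℝ → ℝ)
    (hσ : MeasurePreserving σ (volume.restrict (Set.Icc 0 T)) (volume.restrict (Set.Icc 0 T)))
    (hxx' : ∀ t ∈ Set.Icc (0 : ℝ) T, x' t = x (σ t))
    (hAx : Continuous fun t => A (x t))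
    (hAx' : Continuous fun t => A (x' t))
    (Φ Φ' : ℝ → Matrix (Fin n) (Fin n) ℝ)
    (hΦ0 : Φ 0 = 1) (hΦ'0 : Φ' 0 = 1)
    (hΦ : ∀ t ∈ Set.Icc (0 : ℝ) T, HasDerivAt Φ (A (x t) * Φ t) t)
    (hΦ' : ∀ t ∈ Set.Icc (0 : ℝ) T, HasDerivAt Φ' (A (x' t) * Φ' t) t) :
    Φ T = Φ' T := by
  -- The entrywise sup norm of the statement is not submultiplicative; switch to the operator
  -- norm, transporting derivatives through the norm-free slope characterisation. Completeness is
  -- passed by name because instance search would find it for the entrywise uniformity instead.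
  let _ : NormedRing (Matrix (Fin n) (Fin n) ℝ) := Matrix.linftyOpNormedRing
  let _ : NormedAlgebra ℝ (Matrix (Fin n) (Fin n) ℝ) := Matrix.linftyOpNormedAlgebra
  exact commuting_flow_eq_of_measurePreserving (h𝔸 := FiniteDimensional.complete ℝ _) hT hcomm
    hσ hxx' hAx hAx'
    (fun t ht => hasDerivAt_iff_tendsto_slope.mpr (hasDerivAt_iff_tendsto_slope.mp (hΦ t ht)))
    (fun t ht => hasDerivAt_iff_tendsto_slope.mpr (hasDerivAt_iff_tendsto_slope.mp (hΦ' t ht)))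
    (hΦ0.trans hΦ'0.symm)

/-- For a commuting family of generators, the fundamental solution at time `T` is invariant
under measure-preserving rearrangement of the input path: if `Φ̇ = A(x(t))Φ`,
`Φ'̇ = A(x'(t))Φ'`, `Φ(0) = Φ'(0) = I`, and `x' = x ∘ σ` for a measure-preserving bijection
`σ` of `[0,T]`, then `Φ(T) = Φ'(T)`. -/
theorem commuting_flow_rearrangement_invariant
    (n : ℕ) (𝒳 : Type*) (T : ℝ) (hT : 0 ≤ T)
    (A : 𝒳 → Matrix (Fin n) (Fin n) ℝ)
    (hcomm : ∀ x y : 𝒳, A x * A y = A y * A x)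
    (x x' : ℝ → 𝒳) (σ : ℝ → ℝ)
    (hσ : MeasurePreserving σ (volume.restrict (Set.Icc 0 T)) (volume.restrict (Set.Icc 0 T)))
    (hσbij : Set.BijOn σ (Set.Icc 0 T) (Set.Icc 0 T))
    (hxx' : ∀ t ∈ Set.Icc (0 : ℝ) T, x' t = x (σ t))
    (hAx : Continuous fun t => A (x t))
    (hAx' : Continuous fun t => A (x' t))
    (Φ Φ' : ℝ → Matrix (Fin n) (Fin n) ℝ)
    (hΦ0 : Φ 0 = 1) (hΦ'0 : Φ' 0 = 1)
    (hΦ : ∀ t ∈ Set.Icc (0 : ℝ) T, HasDerivAt Φ (A (x t) * Φ t) t)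
    (hΦ' : ∀ t ∈ Set.Icc (0 : ℝ) T, HasDerivAt Φ' (A (x' t) * Φ' t) t) :
    Φ T = Φ' T :=
  commuting_flow_rearrangement_invariant_general n 𝒳 T hT A hcomm x x' σ hσ hxx' hAx hAx' Φ Φ' hΦ0
    hΦ'0 hΦ hΦ'
end

section
/- Let G be a matrix Lie group, Θ : G → H a Lie group homomorphism with kernel N, Ψ : [0,T] → G a smooth curve, and s : H → G a smooth local section of Θ (i.e., Θ∘s = id). Define Q(t) = s(Θ(Ψ(t))) and a(t) = Q(t)⁻¹ Ψ(t). Then a(t) ∈ N for all t, and a satisfies the ODE ȧ = (Q⁻¹ A Q − Q⁻¹ Q̇) a where A(t) = Ψ̇(t)Ψ(t)⁻¹; moreover Q⁻¹AQ − Q⁻¹Q̇ lies in the Lie algebra of N. -/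
/-!
Since `Θ ∘ s = id`, `Θ Q = Θ (s (Θ Ψ)) = Θ Ψ`, so `a = Q⁻¹ Ψ` lies in the kernel. The ODE is the
product rule together with `(Q⁻¹)˙ = -Q⁻¹ Q̇ Q⁻¹`. Its generator `B = ȧ a⁻¹` is the velocity at
`u = t` of the curve `u ↦ a u * (a t)⁻¹`, which stays in the kernel and passes through `1`, so
`dΘ₁ B = 0`.

The matrix calculus is transported along the algebra isomorphism between matrices and continuous
endomorphisms of `ι → 𝕜`, a complete normed algebra, where the product rule and the derivative of
`Ring.inverse` are available; the sup norm on matrices is not submultiplicative.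
-/

open scoped Topology

attribute [local instance] Matrix.normedAddCommGroup Matrix.normedSpace

theorem map_ringInverse {M N F : Type*} [MonoidWithZero M] [MonoidWithZero N] [EquivLike F M N]
    [MulEquivClass F M N] (f : F) (x : M) : f (Ring.inverse x) = Ring.inverse (f x) := by
  by_cases hx : IsUnit x
  · obtain ⟨u, rfl⟩ := hx
    simpa using (Ring.inverse_unit (Units.map (f : M →* N) u)).symm
  · rw [Ring.inverse_non_unit x hx, Ring.inverse_non_unit _ (by rwa [isUnit_map_iff f]), map_zero]

theorem fderiv_apply_eq_zero_of_comp_eventuallyEq_const {𝕜 E F : Type*} [NontriviallyNormedField 𝕜]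
    [NormedAddCommGroup E] [NormedSpace 𝕜 E] [NormedAddCommGroup F] [NormedSpace 𝕜 F]
    {Θ : E → F} {c : 𝕜 → E} {v : E} {y : F} {t : 𝕜} (hΘ : DifferentiableAt 𝕜 Θ (c t))
    (hc : HasDerivAt c v t) (hconst : ∀ᶠ u in 𝓝 t, Θ (c u) = y) : fderiv 𝕜 Θ (c t) v = 0 :=
  (hΘ.hasFDerivAt.comp_hasDerivAt t hc).unique ((hasDerivAt_const t y).congr_of_eventuallyEq hconst)

namespace Matrix

variable {𝕜 : Type*} [NontriviallyNormedField 𝕜] [CompleteSpace 𝕜] {ι : Type*} [Fintype ι]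
  [DecidableEq ι]

variable (𝕜 ι) in
noncomputable def toContinuousLinearMapAlgEquiv :
    Matrix ι ι 𝕜 ≃ₐ[𝕜] ((ι → 𝕜) →L[𝕜] (ι → 𝕜)) :=
  toLinAlgEquiv'.trans (Module.End.toContinuousLinearMap (ι → 𝕜))

local notation "Φ" => toContinuousLinearMapAlgEquiv 𝕜 ι

theorem hasDerivAt_toContinuousLinearMapAlgEquiv {f : 𝕜 → Matrix ι ι 𝕜} {f' : Matrix ι ι 𝕜}
    {t : 𝕜} (hf : HasDerivAt f f' t) : HasDerivAt (fun u => Φ (f u)) (Φ f') t :=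
  (Φ).toLinearEquiv.toContinuousLinearEquiv.hasFDerivAt.comp_hasDerivAt t hf

theorem hasDerivAt_toContinuousLinearMapAlgEquiv_symm {g : 𝕜 → (ι → 𝕜) →L[𝕜] (ι → 𝕜)}
    {g' : (ι → 𝕜) →L[𝕜] (ι → 𝕜)} {t : 𝕜} (hg : HasDerivAt g g' t) :
    HasDerivAt (fun u => (Φ).symm (g u)) ((Φ).symm g') t :=
  (Φ).toLinearEquiv.toContinuousLinearEquiv.symm.hasFDerivAt.comp_hasDerivAt t hg

theorem hasDerivAt_mul {f g : 𝕜 → Matrix ι ι 𝕜} {f' g' : Matrix ι ι 𝕜} {t : 𝕜}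
    (hf : HasDerivAt f f' t) (hg : HasDerivAt g g' t) :
    HasDerivAt (fun u => f u * g u) (f' * g t + f t * g') t := by
  simpa using hasDerivAt_toContinuousLinearMapAlgEquiv_symm <|
    (hasDerivAt_toContinuousLinearMapAlgEquiv hf).mul (hasDerivAt_toContinuousLinearMapAlgEquiv hg)

theorem hasDerivAt_inv {Q : 𝕜 → Matrix ι ι 𝕜} {Q' : Matrix ι ι 𝕜} {t : 𝕜}
    (hQ : HasDerivAt Q Q' t) (hQt : IsUnit (Q t)) :
    HasDerivAt (fun u => (Q u)⁻¹) (-((Q t)⁻¹ * Q' * (Q t)⁻¹)) t := by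
  obtain ⟨v, hv⟩ := hQt.map Φ
  have hinv : ∀ M : Matrix ι ι 𝕜, M⁻¹ = (Φ).symm (Ring.inverse (Φ M)) := fun M => by
    rw [nonsing_inv_eq_ringInverse, ← map_ringInverse, AlgEquiv.symm_apply_apply]
  have hΦQ : HasDerivAt (fun u => Φ (Q u)) (Φ Q') t := hasDerivAt_toContinuousLinearMapAlgEquiv hQ
  have hv_inv : (↑v⁻¹ : (ι → 𝕜) →L[𝕜] (ι → 𝕜)) = Φ (Q t)⁻¹ := by
    rw [← Ring.inverse_unit, hv, ← map_ringInverse, nonsing_inv_eq_ringInverse]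
  have := hasDerivAt_toContinuousLinearMapAlgEquiv_symm
    ((hasFDerivAt_ringInverse v).comp_hasDerivAt_of_eq t hΦQ hv)
  convert this using 1
  · exact funext fun u => hinv (Q u)
  · simp [hv_inv, ← map_mul]

theorem hasDerivAt_nonsing_inv_mul {Ψ Q : 𝕜 → Matrix ι ι 𝕜} {A Q' : Matrix ι ι 𝕜} {t : 𝕜}
    (hΨ : HasDerivAt Ψ (A * Ψ t) t) (hQ : HasDerivAt Q Q' t) (hQt : IsUnit (Q t)) :
    HasDerivAt (fun u => (Q u)⁻¹ * Ψ u)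
      (((Q t)⁻¹ * A * Q t - (Q t)⁻¹ * Q') * ((Q t)⁻¹ * Ψ t)) t := by
  convert hasDerivAt_mul (hasDerivAt_inv hQ hQt) hΨ using 1
  simp only [sub_mul, mul_assoc,
    mul_nonsing_inv_cancel_left _ _ ((isUnit_iff_isUnit_det _).1 hQt)]
  noncomm_ring

section MatrixGroupHom

variable {R N : Type*} [CommRing R] [Monoid N] {Θ : Matrix ι ι R → N}

theorem map_nonsing_inv_mul_map (hmul : ∀ X Y, IsUnit X → IsUnit Y → Θ (X * Y) = Θ X * Θ Y)
    (h1 : Θ 1 = 1) {X : Matrix ι ι R} (hX : IsUnit X) : Θ X⁻¹ * Θ X = 1 := by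
  rw [← hmul _ _ (isUnit_nonsing_inv_iff.2 hX) hX,
    nonsing_inv_mul _ ((isUnit_iff_isUnit_det _).1 hX), h1]

theorem map_mul_map_nonsing_inv (hmul : ∀ X Y, IsUnit X → IsUnit Y → Θ (X * Y) = Θ X * Θ Y)
    (h1 : Θ 1 = 1) {X : Matrix ι ι R} (hX : IsUnit X) : Θ X * Θ X⁻¹ = 1 := by
  rw [← hmul _ _ hX (isUnit_nonsing_inv_iff.2 hX),
    mul_nonsing_inv _ ((isUnit_iff_isUnit_det _).1 hX), h1]

end MatrixGroupHom

theorem fderiv_one_apply_eq_zero_of_hasDerivAt_of_map_eq_one {F : Type*} [NormedAddCommGroup F]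
    [NormedSpace 𝕜 F] [Monoid F] {Θ : Matrix ι ι 𝕜 → F}
    (hmul : ∀ X Y, IsUnit X → IsUnit Y → Θ (X * Y) = Θ X * Θ Y) (h1 : Θ 1 = 1)
    (hΘ : DifferentiableAt 𝕜 Θ 1) {a : 𝕜 → Matrix ι ι 𝕜} {B : Matrix ι ι 𝕜} {t : 𝕜}
    (hunit : ∀ u, IsUnit (a u)) (hker : ∀ u, Θ (a u) = 1) (ha : HasDerivAt a (B * a t) t) :
    fderiv 𝕜 Θ 1 B = 0 := by
  have hat : a t * (a t)⁻¹ = 1 := mul_nonsing_inv _ ((isUnit_iff_isUnit_det _).1 (hunit t))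
  have hcurve := hasDerivAt_mul ha (hasDerivAt_const t (a t)⁻¹)
  rw [mul_zero, add_zero, mul_assoc, hat, mul_one] at hcurve
  have hcurve_ker : ∀ u, Θ (a u * (a t)⁻¹) = 1 := fun u => by
    rw [hmul _ _ (hunit u) (isUnit_nonsing_inv_iff.2 (hunit t)), hker u]
    simpa only [hker t] using map_mul_map_nonsing_inv hmul h1 (hunit t)
  have h := fderiv_apply_eq_zero_of_comp_eventuallyEq_const (hat ▸ hΘ) hcurve
    (Filter.Eventually.of_forall hcurve_ker)
  rwa [hat] at h

end Matrix

/-- Let `Θ` be a (matrix Lie group) homomorphism with kernel `N`, `Ψ` a smooth curve of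
invertible matrices with logarithmic derivative `A(t) = Ψ̇ Ψ⁻¹`, and `s` a smooth local
section of `Θ`. Setting `Q(t) = s(Θ(Ψ(t)))` and `a(t) = Q(t)⁻¹ Ψ(t)`, the curve `a` stays in
the kernel of `Θ`, satisfies the ODE `ȧ = (Q⁻¹AQ − Q⁻¹Q̇)a`, and the generator
`Q⁻¹AQ − Q⁻¹Q̇` lies in the Lie algebra of the kernel (it is killed by `dΘ` at the
identity). -/
theorem section_decomposition_kernel_ode
    (n m : ℕ)
    (Θ : Matrix (Fin n) (Fin n) ℝ → Matrix (Fin m) (Fin m) ℝ)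
    (hΘdiff : Differentiable ℝ Θ)
    (hΘmul : ∀ X Y : Matrix (Fin n) (Fin n) ℝ, IsUnit X → IsUnit Y → Θ (X * Y) = Θ X * Θ Y)
    (hΘ1 : Θ 1 = 1)
    (hΘunit : ∀ X : Matrix (Fin n) (Fin n) ℝ, IsUnit X → IsUnit (Θ X))
    (s : Matrix (Fin m) (Fin m) ℝ → Matrix (Fin n) (Fin n) ℝ)
    (hsdiff : Differentiable ℝ s)
    (hsec : ∀ h : Matrix (Fin m) (Fin m) ℝ, IsUnit h → Θ (s h) = h)
    (Ψ : ℝ → Matrix (Fin n) (Fin n) ℝ)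
    (hΨunit : ∀ t, IsUnit (Ψ t))
    (A : ℝ → Matrix (Fin n) (Fin n) ℝ)
    (hΨ : ∀ t, HasDerivAt Ψ (A t * Ψ t) t)
    (Q a : ℝ → Matrix (Fin n) (Fin n) ℝ)
    (hQ : ∀ t, Q t = s (Θ (Ψ t)))
    (hQunit : ∀ t, IsUnit (Q t))
    (ha : ∀ t, a t = (Q t)⁻¹ * Ψ t) :
    (∀ t, Θ (a t) = 1) ∧
    (∀ t, HasDerivAt a
      (((Q t)⁻¹ * A t * Q t - (Q t)⁻¹ * deriv Q t) * a t) t) ∧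
    (∀ t, fderiv ℝ Θ 1 ((Q t)⁻¹ * A t * Q t - (Q t)⁻¹ * deriv Q t) = 0) := by
  have hΘQ : ∀ t, Θ (Q t) = Θ (Ψ t) := fun t => by
    rw [hQ]; exact hsec _ (hΘunit _ (hΨunit t))
  have hker : ∀ t, Θ (a t) = 1 := fun t => by
    rw [ha, hΘmul _ _ (Matrix.isUnit_nonsing_inv_iff.2 (hQunit t)) (hΨunit t), ← hΘQ,
      Matrix.map_nonsing_inv_mul_map hΘmul hΘ1 (hQunit t)]
  have hQdiff : ∀ t, HasDerivAt Q (deriv Q t) t := fun t => by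
    rw [funext hQ]
    exact ((hsdiff _).comp t ((hΘdiff _).comp t (hΨ t).differentiableAt)).hasDerivAt
  have hode : ∀ t, HasDerivAt a (((Q t)⁻¹ * A t * Q t - (Q t)⁻¹ * deriv Q t) * a t) t :=
    fun t => by
      simpa only [← ha, ← funext ha] using
        Matrix.hasDerivAt_nonsing_inv_mul (hΨ t) (hQdiff t) (hQunit t)
  have haunit : ∀ t, IsUnit (a t) := fun t => by
    rw [ha]; exact (Matrix.isUnit_nonsing_inv_iff.2 (hQunit t)).mul (hΨunit t)
  exact ⟨hker, hode, fun t => Matrix.fderiv_one_apply_eq_zero_of_hasDerivAt_of_map_eq_one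
    hΘmul hΘ1 (hΘdiff 1) haunit hker (hode t)⟩
end

section
/- The matrices P (cyclic coordinate permutation) and R given by P = [[0,0,1],[1,0,0],[0,1,0]] and R = (1/4)[[√5−1, −(√5+1), 2],[√5+1, 2, √5−1],[−2, √5−1, √5+1]] are both elements of SO(3,ℝ), and they satisfy the relations P³ = I, R⁵ = I, and (PR)² = I. -/
set_option maxHeartbeats 1000000

/-- The cyclic permutation matrix `P` generating the `A₅` presentation. -/
noncomputable def A5P : Matrix (Fin 3) (Fin 3) ℝ :=
  !![0, 0, 1; 1, 0, 0; 0, 1, 0]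

/-- The `72°` rotation matrix `R` generating the `A₅` presentation. -/
noncomputable def A5R : Matrix (Fin 3) (Fin 3) ℝ :=
  (1 / 4 : ℝ) • !![Real.sqrt 5 - 1, -(Real.sqrt 5 + 1), 2;
                   Real.sqrt 5 + 1, 2, Real.sqrt 5 - 1;
                   -2, Real.sqrt 5 - 1, Real.sqrt 5 + 1]

/-- `P` and `R` are elements of `SO(3,ℝ)` (orthogonal with determinant `1`) and satisfy the
relations `P³ = I`, `R⁵ = I`, `(PR)² = I` presenting the alternating group `A₅`. -/
theorem A5_generators_in_SO3_and_relations :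
    A5P.transpose * A5P = 1 ∧ A5P.det = 1 ∧
    A5R.transpose * A5R = 1 ∧ A5R.det = 1 ∧
    A5P ^ 3 = 1 ∧ A5R ^ 5 = 1 ∧ (A5P * A5R) ^ 2 = 1 := by
  have hs : Real.sqrt 5 * Real.sqrt 5 = 5 := Real.mul_self_sqrt (by norm_num)
  set s := Real.sqrt 5 with hsdef
  have hP3 : A5P ^ 3 = 1 := by
    rw [pow_succ, pow_two]
    ext i j
    fin_cases i <;> fin_cases j <;>
      simp [A5P, Matrix.mul_apply, Fin.sum_univ_succ, Matrix.one_apply]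
  have hR2 : A5R * A5R = (1 / 4 : ℝ) •
      !![-1 - s, -2, s - 1; 2, 1 - s, 1 + s; 1 - s, 1 + s, 2] := by
    ext i j
    fin_cases i <;> fin_cases j <;>
      · simp [A5R, Matrix.mul_apply, Fin.sum_univ_succ]
        nlinarith [hs]
  have hR4 : (A5R * A5R) * (A5R * A5R) = (1 / 4 : ℝ) •
      !![s - 1, 1 + s, -2; -1 - s, 2, s - 1; 2, s - 1, 1 + s] := by
    rw [hR2]
    ext i j
    fin_cases i <;> fin_cases j <;>
      · simp [Matrix.mul_apply, Fin.sum_univ_succ]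
        nlinarith [hs]
  have hR5 : A5R ^ 5 = 1 := by
    have : A5R ^ 5 = ((A5R * A5R) * (A5R * A5R)) * A5R := by
      rw [show (5:ℕ)=2+2+1 from rfl, pow_add, pow_add, pow_one, pow_two]
    rw [this, hR4]
    ext i j
    fin_cases i <;> fin_cases j <;>
      · simp [A5R, Matrix.mul_apply, Fin.sum_univ_succ, Matrix.one_apply]
        nlinarith [hs]
  have hPR : (A5P * A5R) ^ 2 = 1 := by
    rw [pow_two]
    ext i j
    fin_cases i <;> fin_cases j <;>
      · simp [A5P, A5R, Matrix.mul_apply, Fin.sum_univ_succ, Matrix.one_apply]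
        nlinarith [hs]
  refine ⟨?_, ?_, ?_, ?_, hP3, hR5, hPR⟩
  · ext i j
    fin_cases i <;> fin_cases j <;>
      simp [A5P, Matrix.mul_apply, Fin.sum_univ_succ, Matrix.one_apply]
  · simp [A5P, Matrix.det_fin_three]
  · ext i j
    fin_cases i <;> fin_cases j <;>
      · simp [A5R, Matrix.mul_apply, Fin.sum_univ_succ, Matrix.one_apply]
        nlinarith [hs]
  · simp [A5R, Matrix.det_fin_three]
    nlinarith [hs]
end
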